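/- arXiv:1506.05620 — 5 statements merged into one kernel-verified Lean document; each statement's English description precedes it below -/
import Mathlib

section
/- Let G be a directed graph with travel costs c satisfying c(a) ≥ 0, let R be a multiset of arcs of G, and let T* be any closed walk traversing all arcs of R (with multiplicity). If R* is a minimum-cost multiset of arcs of G such that every vertex of G[R ⊎ R*] is balanced, then c(R ⊎ R*) ≤ c(T*), where the cost of a multiset is the sum over its elements of cost times multiplicity. -/
/-- A walk: a list of arcs where consecutive arcs chain head-to-tail. -/
def IsWalkL {V : Type*} (w : List (V × V)) : Prop :=
  w.Chain' (fun a b => a.2 = b.1)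

/-- A closed walk: nonempty walk whose last head equals its first tail. -/
def IsClosedWalkL {V : Type*} (w : List (V × V)) : Prop :=
  w ≠ [] ∧ IsWalkL w ∧ (w.getLast?).map Prod.snd = (w.head?).map Prod.fst

/-- Cost of a walk: sum of the costs of its arcs, with repetition. -/
def walkCost {V : Type*} (c : V × V → ℕ) (w : List (V × V)) : ℕ :=
  (w.map c).sum

/-- Cost of an arc multiset: sum of arc costs weighted by multiplicity. -/
def msetCost {V : Type*} (c : V × V → ℕ) (A : Multiset (V × V)) : ℕ :=
  (A.map c).sum

/-- In-degree of `v` in the multigraph with arc multiset `A`. -/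
def indegM {V : Type*} [DecidableEq V] (A : Multiset (V × V)) (v : V) : ℕ :=
  (A.filter (fun a => a.2 = v)).card

/-- Out-degree of `v` in the multigraph with arc multiset `A`. -/
def outdegM {V : Type*} [DecidableEq V] (A : Multiset (V × V)) (v : V) : ℕ :=
  (A.filter (fun a => a.1 = v)).card

/-- Every vertex is balanced: in-degree equals out-degree. -/
def BalancedM {V : Type*} [DecidableEq V] (A : Multiset (V × V)) : Prop :=
  ∀ v, indegM A v = outdegM A v

/-- Adjacency in the underlying undirected multigraph. -/
def UAdj {V : Type*} (A : Multiset (V × V)) (u v : V) : Prop :=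
  (u, v) ∈ A ∨ (v, u) ∈ A

/-- `v` is a vertex of the multigraph induced by the arc multiset `A`. -/
def InSupp {V : Type*} (A : Multiset (V × V)) (v : V) : Prop :=
  ∃ a ∈ A, a.1 = v ∨ a.2 = v

/-- The underlying undirected multigraph is connected. -/
def ConnectedM {V : Type*} (A : Multiset (V × V)) : Prop :=
  ∀ u, InSupp A u → ∀ v, InSupp A v → Relation.ReflTransGen (UAdj A) u v

/-- Eulerian: there is a closed walk traversing each arc exactly as often as
its multiplicity. -/
def EulerianM {V : Type*} (A : Multiset (V × V)) : Prop :=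
  ∃ w : List (V × V), IsClosedWalkL w ∧ (↑w : Multiset (V × V)) = A

lemma walk_fst_snd {V : Type*} : ∀ (w : List (V × V)), IsWalkL w → ∀ (hne : w ≠ []),
    w.map Prod.fst ++ [(w.getLast hne).2] = (w.head hne).1 :: w.map Prod.snd := by
  intro w
  induction w with
  | nil => intro _ h; exact absurd rfl h
  | cons a t ih =>
    intro hw hne
    cases t with
    | nil => simp
    | cons b t' =>
      simp only [IsWalkL, List.Chain', List.isChain_cons_cons] at hw
      have h2 := ih hw.2 (by simp)
      simp only [List.map_cons, List.getLast_cons (by simp : (b :: t') ≠ []),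
        List.head_cons] at *
      rw [List.cons_append, h2, hw.1]

lemma closed_balanced {V : Type*} [DecidableEq V] (w : List (V × V))
    (hw : IsClosedWalkL w) : BalancedM (↑w : Multiset (V × V)) := by
  obtain ⟨hne, hwalk, hclose⟩ := hw
  have heq := walk_fst_snd w hwalk hne
  have hlh : (w.getLast hne).2 = (w.head hne).1 := by
    rw [List.getLast?_eq_getLast hne, List.head?_eq_head hne] at hclose
    simpa using hclose
  have hperm : (↑(w.map Prod.fst) : Multiset V) = ↑(w.map Prod.snd) := by
    have h3 : (↑(w.map Prod.fst ++ [(w.getLast hne).2]) : Multiset V)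
        = ↑((w.head hne).1 :: w.map Prod.snd) := by rw [heq]
    rw [hlh] at h3
    simp only [← Multiset.coe_add, ← Multiset.cons_coe] at h3
    simp only [Multiset.coe_nil, Multiset.cons_zero] at h3
    rw [← Multiset.singleton_add, add_comm ({(w.head hne).1} : Multiset V)] at h3
    exact add_right_cancel h3
  intro v
  have h1 : indegM (↑w) v = Multiset.count v (↑(w.map Prod.snd) : Multiset V) := by
    rw [indegM, ← Multiset.map_coe, Multiset.count_map]
    congr 1
    exact Multiset.filter_congr (fun a _ => by simp [eq_comm])
  have h2 : outdegM (↑w) v = Multiset.count v (↑(w.map Prod.fst) : Multiset V) := by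
    rw [outdegM, ← Multiset.map_coe, Multiset.count_map]
    congr 1
    exact Multiset.filter_congr (fun a _ => by simp [eq_comm])
  rw [h1, h2, hperm]

lemma msetCost_add {V : Type*} (c : V × V → ℕ) (A B : Multiset (V × V)) :
    msetCost c (A + B) = msetCost c A + msetCost c B := by
  simp [msetCost]

/-- If `T*` is a closed walk traversing all arcs of the multiset `R` (with
multiplicity) and `R*` is a minimum-cost multiset of arcs of `G` such that
every vertex of `G[R ⊎ R*]` is balanced, then `c(R ⊎ R*) ≤ c(T*)`. -/
theorem stmt2 {V : Type*} [DecidableEq V] (A : Set (V × V)) (c : V × V → ℕ)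
    (R : Multiset (V × V)) (hRA : ∀ a ∈ R, a ∈ A)
    (Tstar : List (V × V)) (hTA : ∀ a ∈ Tstar, a ∈ A)
    (hT : IsClosedWalkL Tstar) (hserve : R ≤ (↑Tstar : Multiset (V × V)))
    (Rstar : Multiset (V × V)) (hRsA : ∀ a ∈ Rstar, a ∈ A)
    (hbal : BalancedM (R + Rstar))
    (hmin : ∀ S : Multiset (V × V), (∀ a ∈ S, a ∈ A) → BalancedM (R + S) →
      msetCost c Rstar ≤ msetCost c S) :
    msetCost c (R + Rstar) ≤ walkCost c Tstar := by
  set T : Multiset (V × V) := ↑Tstar with hTdef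
  have hbalT : BalancedM T := closed_balanced Tstar hT
  set S : Multiset (V × V) := T - R with hSdef
  have hRS : R + S = T := by
    rw [hSdef, add_comm]
    exact tsub_add_cancel_of_le hserve
  have hSA : ∀ a ∈ S, a ∈ A := fun a ha =>
    hTA a (by simpa [hTdef] using Multiset.mem_of_le (Multiset.sub_le_self _ _) ha)
  have hminS := hmin S hSA (by rw [hRS]; exact hbalT)
  have hwc : walkCost c Tstar = msetCost c T := by
    simp [walkCost, msetCost, hTdef, Multiset.map_coe]
  rw [hwc, ← hRS, msetCost_add, msetCost_add]
  omega
end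

section
/- Let I = (G, c, R) be a mixed windy Rural Postman instance and I' = (G', c, R') the directed instance obtained by replacing every undirected edge {u,v} of G by the two arcs (u,v) and (v,u), and replacing each required edge {u,v} ∈ R by the arc in its cheaper direction (i.e., (u,v) if c(u,v) ≤ c(v,u), else (v,u)). Then every feasible solution of I' is a feasible solution of I with the same cost, and for every feasible solution T of I there exists a feasible solution T' of I' with c(T') ≤ 3·c(T). -/
section Aux
variable {V : Type*}

lemma bind_walk_aux (g : V × V → List (V × V))
    (hh : ∀ a, (g a).head? = some a)
    (hl : ∀ a, (g a).getLast? = some a)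
    (hc : ∀ a, IsWalkL (g a)) :
    ∀ T : List (V × V), IsWalkL T →
      IsWalkL (T.flatMap g) ∧ (T.flatMap g).head? = T.head? ∧
        (T.flatMap g).getLast? = T.getLast? := by
  intro T
  induction T with
  | nil => intro _; simp [IsWalkL, List.Chain']
  | cons a t ih =>
    intro hT
    have hT' : IsWalkL t := (List.isChain_cons.mp hT).2
    have hhd : ∀ y ∈ t.head?, a.2 = y.1 := (List.isChain_cons.mp hT).1
    obtain ⟨ih1, ih2, ih3⟩ := ih hT'
    have hne : g a ≠ [] := by
      intro h
      have := hh a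
      rw [h] at this
      simp at this
    have hbind : (a :: t).flatMap g = g a ++ t.flatMap g := by simp
    refine ⟨?_, ?_, ?_⟩
    · rw [hbind, IsWalkL, List.Chain', List.isChain_append]
      refine ⟨hc a, ih1, ?_⟩
      intro x hx y hy
      rw [hl a, Option.mem_def, Option.some_inj] at hx
      subst hx
      rw [ih2] at hy
      exact hhd y hy
    · rw [hbind, List.head?_append_of_ne_nil _ hne, hh a]
      rfl
    · rw [hbind]
      cases ht : t with
      | nil =>
        simp only [List.flatMap_nil, List.append_nil]
        rw [hl a]
        rfl
      | cons b s =>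
        have hne2 : t.flatMap g ≠ [] := by
          intro h
          have h2 := ih2
          rw [h, ht] at h2
          simp at h2
        rw [← ht, List.getLast?_append_of_ne_nil _ hne2, ih3, ht,
          List.getLast?_cons_cons]

lemma bind_cost_aux (c : V × V → ℕ) (g : V × V → List (V × V))
    (key : ∀ a, walkCost c (g a) ≤ 3 * c a) :
    ∀ T : List (V × V), walkCost c (T.flatMap g) ≤ 3 * walkCost c T := by
  intro T
  induction T with
  | nil => simp [walkCost]
  | cons a t ih =>
    have hbind : (a :: t).flatMap g = g a ++ t.flatMap g := by simp
    rw [hbind]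
    have h1 : walkCost c (g a ++ t.flatMap g)
        = walkCost c (g a) + walkCost c (t.flatMap g) := by simp [walkCost]
    have h2 : walkCost c (a :: t) = c a + walkCost c t := by simp [walkCost]
    rw [h1, h2]
    have := key a
    omega

end Aux

/-- Directing the required edges of a mixed windy RPP instance in their
cheaper direction: every feasible solution of the directed instance `I'` is a
feasible solution of `I` of the same cost, and every feasible solution `T` of
`I` yields a feasible solution `T'` of `I'` with `c(T') ≤ 3·c(T)`.
Here `E` contains one ordered representative per undirected edge (traversable
in both directions), `A` are the arcs, `RA ⊆ A` and `RE ⊆ E` the required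
arcs and edges. -/
theorem stmt7 {V : Type*} [DecidableEq V] (A E : Set (V × V)) (c : V × V → ℕ)
    (hrep : ∀ a ∈ E, Prod.swap a ∉ E)
    (RA : Set (V × V)) (hRAsub : RA ⊆ A)
    (RE : Set (V × V)) (hREsub : RE ⊆ E) :
    (∀ w : List (V × V),
      (IsClosedWalkL w ∧ (∀ a ∈ w, a ∈ A ∪ E ∪ Prod.swap '' E) ∧
        (∀ a ∈ RA, a ∈ w) ∧
        (∀ e ∈ RE, (if c e ≤ c (Prod.swap e) then e else Prod.swap e) ∈ w)) →
      (IsClosedWalkL w ∧ (∀ a ∈ w, a ∈ A ∪ E ∪ Prod.swap '' E) ∧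
        (∀ a ∈ RA, a ∈ w) ∧ (∀ e ∈ RE, e ∈ w ∨ Prod.swap e ∈ w))) ∧
    ∀ T : List (V × V),
      (IsClosedWalkL T ∧ (∀ a ∈ T, a ∈ A ∪ E ∪ Prod.swap '' E) ∧
        (∀ a ∈ RA, a ∈ T) ∧ (∀ e ∈ RE, e ∈ T ∨ Prod.swap e ∈ T)) →
      ∃ T' : List (V × V),
        (IsClosedWalkL T' ∧ (∀ a ∈ T', a ∈ A ∪ E ∪ Prod.swap '' E) ∧
          (∀ a ∈ RA, a ∈ T') ∧
          (∀ e ∈ RE, (if c e ≤ c (Prod.swap e) then e else Prod.swap e) ∈ T')) ∧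
        walkCost c T' ≤ 3 * walkCost c T := by
    classical
  constructor
  · rintro w ⟨h1, h2, h3, h4⟩
    refine ⟨h1, h2, h3, fun e he => ?_⟩
    have := h4 e he
    split at this
    · exact Or.inl this
    · exact Or.inr this
  · rintro T ⟨hclosed, hmem, hRA, hRE⟩
    set P : V × V → Prop :=
      fun a => Prod.swap a ∈ E ∪ Prod.swap '' E ∧ c (Prod.swap a) ≤ c a with hP
    set g : V × V → List (V × V) :=
      fun a => if P a then [a, Prod.swap a, a] else [a] with hg
    have hh : ∀ a, (g a).head? = some a := by
      intro a; rw [hg]; dsimp only; split <;> rfl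
    have hl : ∀ a, (g a).getLast? = some a := by
      intro a; rw [hg]; dsimp only; split <;> rfl
    have hc : ∀ a, IsWalkL (g a) := by
      intro a; rw [hg]; dsimp only; split <;> simp [IsWalkL, List.Chain']
    have hself : ∀ a, a ∈ g a := by
      intro a; rw [hg]; dsimp only; split <;> simp
    have hmem_g : ∀ a b, b ∈ g a → b = a ∨ (b = Prod.swap a ∧ P a) := by
      intro a b hb
      rw [hg] at hb; dsimp only at hb
      split at hb
      · rename_i hPa
        simp only [List.mem_cons, List.not_mem_nil, or_false] at hb
        rcases hb with h | h | h
        · exact Or.inl h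
        · exact Or.inr ⟨h, hPa⟩
        · exact Or.inl h
      · simp only [List.mem_singleton] at hb
        exact Or.inl hb
    obtain ⟨hTne, hTwalk, hTends⟩ := hclosed
    obtain ⟨hw, hh2, hl2⟩ := bind_walk_aux g hh hl hc T hTwalk
    refine ⟨T.flatMap g, ⟨⟨?_, hw, ?_⟩, ?_, ?_, ?_⟩, ?_⟩
    · intro h
      have h2 := hh2
      rw [h] at h2
      cases T with
      | nil => exact hTne rfl
      | cons a t => simp at h2
    · rw [hh2, hl2]; exact hTends
    · intro b hb
      obtain ⟨a, ha, hba⟩ := List.mem_flatMap.mp hb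
      rcases hmem_g a b hba with h | ⟨h, hPa⟩
      · subst h; exact hmem b ha
      · subst h
        rcases hPa.1 with h' | h'
        · exact Or.inl (Or.inr h')
        · exact Or.inr h'
    · intro a ha
      exact List.mem_flatMap.mpr ⟨a, hRA a ha, hself a⟩
    · intro e he
      have heE : e ∈ E := hREsub he
      rcases hRE e he with heT | hseT
      · split
        · exact List.mem_flatMap.mpr ⟨e, heT, hself e⟩
        · rename_i hnle
          have hPe : P e := ⟨Or.inr ⟨e, heE, rfl⟩, le_of_not_ge hnle⟩
          refine List.mem_flatMap.mpr ⟨e, heT, ?_⟩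
          rw [hg]; dsimp only
          rw [if_pos hPe]
          simp
      · split
        · rename_i hle
          have hPs : P (Prod.swap e) := by
            refine ⟨?_, ?_⟩ <;> rw [Prod.swap_swap]
            · exact Or.inl heE
            · exact hle
          refine List.mem_flatMap.mpr ⟨Prod.swap e, hseT, ?_⟩
          rw [hg]; dsimp only
          rw [if_pos hPs, Prod.swap_swap]
          simp
        · exact List.mem_flatMap.mpr ⟨Prod.swap e, hseT, hself _⟩
    · refine bind_cost_aux c g ?_ T
      intro a
      rw [hg]; dsimp only
      split
      · rename_i hPa
        have h3 : walkCost c [a, Prod.swap a, a] = c a + (c (Prod.swap a) + c a) := by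
          simp [walkCost]
        have := hPa.2
        omega
      · simp [walkCost]
        omega
end

section
/- Let T be a closed walk traversing all demand arcs R_d of a capacitated arc routing instance with vehicle capacity Q, where every single arc has demand at most Q. Then the greedy splitting procedure produces a feasible splitting (W, s) of T: a sequence of mutually non-overlapping segments w_1, ..., w_l of T appearing in order, and a partition s of R_d with each w_i beginning and ending with an arc of s(w_i), such that d(s(w_i)) ≤ Q for all i and d(s(w_i)) + d(first served arc of w_{i+1}) > Q for all i < l. -/
/-- `Interleaved T ws`: the walks in `ws` are mutually non-overlapping
segments of `T` appearing in order. -/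
def Interleaved {V : Type*} : List (V × V) → List (List (V × V)) → Prop
  | _, [] => True
  | T, w :: ws => ∃ pre suf, T = pre ++ w ++ suf ∧ Interleaved suf ws


namespace GreedySplit
variable {A : Type*}

def takeChunk (d : A → ℕ) (cap : ℕ) : List A → List A × List A
  | [] => ([], [])
  | a :: l => if d a ≤ cap then
      ((a :: (takeChunk d (cap - d a) l).1), (takeChunk d (cap - d a) l).2)
    else ([], a :: l)

theorem takeChunk_append (d : A → ℕ) (cap : ℕ) :
    ∀ l : List A, (takeChunk d cap l).1 ++ (takeChunk d cap l).2 = l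
  | [] => rfl
  | a :: l => by
      rw [takeChunk]
      split
      · simpa using takeChunk_append d (cap - d a) l
      · rfl

theorem takeChunk_len (d : A → ℕ) (cap : ℕ) (l : List A) :
    (takeChunk d cap l).2.length ≤ l.length := by
  conv_rhs => rw [← takeChunk_append d cap l]
  simp

theorem takeChunk_sum (d : A → ℕ) (cap : ℕ) :
    ∀ l : List A, (((takeChunk d cap l).1.map d).sum ≤ cap) ∧
      (∀ b, (takeChunk d cap l).2.head? = some b →
        cap < ((takeChunk d cap l).1.map d).sum + d b)
  | [] => by simp [takeChunk]
  | a :: l => by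
      rw [takeChunk]
      split
      · rename_i h
        obtain ⟨h1, h2⟩ := takeChunk_sum d (cap - d a) l
        constructor
        · simpa using (by omega : d a + ((takeChunk d (cap - d a) l).1.map d).sum ≤ cap)
        · intro b hb
          have := h2 b hb
          simp only [List.map_cons, List.sum_cons]
          omega
      · rename_i h
        simp only [List.map_nil, List.sum_nil, List.head?_cons]
        exact ⟨Nat.zero_le _, fun b hb => by cases hb; omega⟩

def greedy (d : A → ℕ) (Q : ℕ) : List A → List (List A)
  | [] => []
  | a :: l => (a :: (takeChunk d (Q - d a) l).1) ::
      greedy d Q (takeChunk d (Q - d a) l).2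
  termination_by l => l.length
  decreasing_by
    simpa using Nat.lt_succ_of_le (takeChunk_len d (Q - d a) l)

theorem greedy_join (d : A → ℕ) (Q : ℕ) :
    ∀ l : List A, (greedy d Q l).flatten = l
  | [] => by rw [greedy]; rfl
  | a :: l => by
      rw [greedy]
      have h := greedy_join d Q (takeChunk d (Q - d a) l).2
      simp [h, takeChunk_append]
  termination_by l => l.length
  decreasing_by
    simpa using Nat.lt_succ_of_le (takeChunk_len d (Q - d a) l)

theorem greedy_ne_nil (d : A → ℕ) (Q : ℕ) :
    ∀ l : List A, ∀ c ∈ greedy d Q l, c ≠ []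
  | [] => by rw [greedy]; simp
  | a :: l => by
      rw [greedy]
      intro c hc
      rcases List.mem_cons.1 hc with h | h
      · subst h; simp
      · exact greedy_ne_nil d Q _ c h
  termination_by l => l.length
  decreasing_by
    simpa using Nat.lt_succ_of_le (takeChunk_len d (Q - d a) l)

theorem mem_of_mem_tc2 (d : A → ℕ) (cap : ℕ) (l : List A) {x : A}
    (hx : x ∈ (takeChunk d cap l).2) : x ∈ l := by
  rw [← takeChunk_append d cap l]; exact List.mem_append_right _ hx

theorem greedy_sum (d : A → ℕ) (Q : ℕ) :
    ∀ l : List A, (∀ x ∈ l, d x ≤ Q) → ∀ c ∈ greedy d Q l, (c.map d).sum ≤ Q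
  | [] => by rw [greedy]; simp
  | a :: l => by
      rw [greedy]
      intro hd c hc
      rcases List.mem_cons.1 hc with h | h
      · subst h
        have h1 := (takeChunk_sum d (Q - d a) l).1
        have ha : d a ≤ Q := hd a (by simp)
        simp only [List.map_cons, List.sum_cons]
        omega
      · exact greedy_sum d Q _ (fun x hx => hd x (List.mem_cons_of_mem _
          (mem_of_mem_tc2 d (Q - d a) l hx))) c h
  termination_by l => l.length
  decreasing_by
    simpa using Nat.lt_succ_of_le (takeChunk_len d (Q - d a) l)

theorem greedy_head (d : A → ℕ) (Q : ℕ) (l : List A) (c : List A) (cs : List (List A))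
    (h : greedy d Q l = c :: cs) : c.head? = l.head? := by
  match l with
  | [] => rw [greedy] at h; cases h
  | a :: l => rw [greedy] at h; cases h; rfl

theorem greedy_chain (d : A → ℕ) (Q : ℕ) :
    ∀ l : List A, (∀ x ∈ l, d x ≤ Q) →
      List.Chain' (fun c₁ c₂ => ∀ b, c₂.head? = some b →
        Q < (c₁.map d).sum + d b) (greedy d Q l)
  | [] => by rw [greedy]; intro; exact List.isChain_nil
  | a :: l => by
      intro hd
      rw [greedy]
      refine List.IsChain.cons (greedy_chain d Q _ (fun x hx => hd x
        (List.mem_cons_of_mem _ (mem_of_mem_tc2 d (Q - d a) l hx)))) ?_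
      intro c₂ hc₂ b hb
      obtain ⟨cs, hcs⟩ : ∃ cs, greedy d Q (takeChunk d (Q - d a) l).2 = c₂ :: cs := by
        cases hg : greedy d Q (takeChunk d (Q - d a) l).2 with
        | nil => rw [hg] at hc₂; cases hc₂
        | cons x xs => rw [hg] at hc₂; cases hc₂; exact ⟨xs, rfl⟩
      have hhead := greedy_head d Q _ _ _ hcs
      rw [hhead] at hb
      have h2 := (takeChunk_sum d (Q - d a) l).2 b hb
      have ha : d a ≤ Q := hd a (by simp)
      simp only [List.map_cons, List.sum_cons]
      omega
  termination_by l => l.length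
  decreasing_by
    simpa using Nat.lt_succ_of_le (takeChunk_len d (Q - d a) l)

theorem cons_sublist_decomp {a : A} : ∀ {l T : List A}, (a :: l).Sublist T →
    ∃ s t, T = s ++ a :: t ∧ l.Sublist t := by
  intro l T h
  induction T with
  | nil => cases h
  | cons b T ih =>
      cases h with
      | cons _ h' =>
          obtain ⟨s, t, rfl, hlt⟩ := ih h'
          exact ⟨b :: s, t, rfl, hlt⟩
      | cons_cons _ h' => exact ⟨[], T, rfl, h'⟩

theorem extract_one : ∀ (c rest T : List A), c ≠ [] → (c ++ rest).Sublist T →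
    ∃ pre w suf, T = pre ++ w ++ suf ∧ w.head? = c.head? ∧
      w.getLast? = c.getLast? ∧ c.Sublist w ∧ rest.Sublist suf
  | [], _, _, h, _ => absurd rfl h
  | [a], rest, T, _, hsub => by
      obtain ⟨s, t, rfl, hlt⟩ := cons_sublist_decomp (by simpa using hsub)
      exact ⟨s, [a], t, by simp, rfl, rfl, by simp, hlt⟩
  | a :: b :: c', rest, T, _, hsub => by
      obtain ⟨s, t, rfl, hlt⟩ := cons_sublist_decomp (by simpa using hsub)
      obtain ⟨pre', w', suf, ht, hh, hg, hsw, hrest⟩ :=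
        extract_one (b :: c') rest t (by simp) hlt
      have hw'ne : w' ≠ [] := by
        intro h; rw [h] at hh; simp at hh
      refine ⟨s, a :: (pre' ++ w'), suf, ?_, rfl, ?_, ?_, hrest⟩
      · rw [ht]; simp
      · have hs : w'.getLast?.isSome := Option.isSome_iff_ne_none.2
          (fun h => hw'ne (List.getLast?_eq_none_iff.1 h))
        rw [show a :: (pre' ++ w') = (a :: pre') ++ w' by simp,
          List.getLast?_append, Option.or_of_isSome hs, hg, List.getLast?_cons_cons]
      · exact List.Sublist.cons₂ a (hsw.trans (List.sublist_append_right pre' w'))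

end GreedySplit

namespace GreedySplit

theorem extract_all {V : Type*} : ∀ (cs : List (List (V × V))) (T : List (V × V)),
    (∀ c ∈ cs, c ≠ []) → cs.flatten.Sublist T →
    ∃ ws, Interleaved T ws ∧ List.Forall₂ (fun c w => w.head? = c.head? ∧
      w.getLast? = c.getLast? ∧ c.Sublist w) cs ws
  | [], T, _, _ => ⟨[], trivial, List.Forall₂.nil⟩
  | c :: cs, T, hne, hsub => by
      obtain ⟨pre, w, suf, rfl, hh, hg, hcw, hrest⟩ :=
        extract_one c cs.flatten T (hne c (by simp)) (by simpa using hsub)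
      obtain ⟨ws, hI, hF⟩ := extract_all cs suf (fun c hc => hne c (by simp [hc])) hrest
      exact ⟨w :: ws, ⟨pre, suf, rfl, hI⟩, List.Forall₂.cons ⟨hh, hg, hcw⟩ hF⟩

theorem foldr_union {V : Type*} [DecidableEq V] :
    ∀ cs : List (List (V × V)),
      (cs.map List.toFinset).foldr (· ∪ ·) ∅ = cs.flatten.toFinset
  | [] => by simp
  | c :: cs => by
      simp [foldr_union cs, List.toFinset_append]

end GreedySplit


/-- The greedy splitting procedure produces a feasible splitting of a closed
walk `T` traversing all demand arcs `Rd` (each of demand at most `Q`):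
mutually non-overlapping segments in order, serving sets partitioning `Rd`,
each segment beginning and ending with a served arc, each serving demand at
most `Q`, and consecutive segments together exceeding `Q` (adding the first
served arc of the next segment). -/
theorem stmt11 {V : Type*} [DecidableEq V] (d : V × V → ℕ) (Q : ℕ)
    (Rd : Finset (V × V)) (hRd : ∀ a ∈ Rd, 0 < d a ∧ d a ≤ Q)
    (T : List (V × V)) (hT : IsClosedWalkL T) (hserve : ∀ a ∈ Rd, a ∈ T) :
    ∃ ws : List (List (V × V) × Finset (V × V)),
      Interleaved T (ws.map Prod.fst) ∧
      ((ws.map Prod.snd).Pairwise fun s t => Disjoint s t) ∧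
      (ws.map Prod.snd).foldr (· ∪ ·) ∅ = Rd ∧
      (∀ p ∈ ws, ∀ a ∈ p.2, a ∈ p.1) ∧
      (∀ p ∈ ws, ∃ a, p.1.head? = some a ∧ a ∈ p.2) ∧
      (∀ p ∈ ws, ∃ a, p.1.getLast? = some a ∧ a ∈ p.2) ∧
      (∀ p ∈ ws, ∑ a ∈ p.2, d a ≤ Q) ∧
      (∀ i, (h : i + 1 < ws.length) → ∀ a,
        (ws.get ⟨i + 1, h⟩).1.head? = some a →
          Q < (∑ x ∈ (ws.get ⟨i, Nat.lt_of_succ_lt h⟩).2, d x) + d a) := by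
  classical
  set L := T.dedup.filter (fun a => a ∈ Rd) with hL
  have hLsub : L.Sublist T := (List.filter_sublist).trans (List.dedup_sublist T)
  have hLnd : L.Nodup := (List.nodup_dedup T).filter _
  have hLmem : ∀ a, a ∈ L ↔ a ∈ Rd := by
    intro a
    simp only [hL, List.mem_filter, List.mem_dedup, decide_eq_true_eq]
    exact ⟨fun h => h.2, fun h => ⟨hserve a h, h⟩⟩
  set cs := GreedySplit.greedy d Q L with hcs
  have hjoin : cs.flatten = L := GreedySplit.greedy_join d Q L
  have hdle : ∀ x ∈ L, d x ≤ Q := fun x hx => (hRd x ((hLmem x).1 hx)).2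
  have hne : ∀ c ∈ cs, c ≠ [] := GreedySplit.greedy_ne_nil d Q L
  obtain ⟨segs, hI, hF⟩ := GreedySplit.extract_all cs T hne (hjoin ▸ hLsub)
  have hlen : cs.length = segs.length := hF.length_eq
  have hget := (List.forall₂_iff_get.1 hF).2
  have hndfl : cs.flatten.Nodup := hjoin ▸ hLnd
  have hchnd : (∀ c ∈ cs, c.Nodup) ∧ cs.Pairwise List.Disjoint :=
    List.nodup_flatten.1 hndfl
  refine ⟨segs.zip (cs.map List.toFinset), ?_, ?_, ?_, ?_, ?_, ?_, ?_, ?_⟩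
  · rw [List.map_fst_zip (by simp [← hlen])]
    exact hI
  · rw [List.map_snd_zip (by simp [← hlen])]
    rw [List.pairwise_map]
    refine hchnd.2.imp ?_
    intro c₁ c₂ h
    rw [Finset.disjoint_left]
    intro a ha1 ha2
    exact h (List.mem_toFinset.1 ha1) (List.mem_toFinset.1 ha2)
  · rw [List.map_snd_zip (by simp [← hlen]), GreedySplit.foldr_union, hjoin]
    ext a
    rw [List.mem_toFinset]
    exact hLmem a
  all_goals
    have hmem : ∀ p ∈ segs.zip (cs.map List.toFinset),
        ∃ i, ∃ hi : i < cs.length, p = (segs[i]'(hlen ▸ hi), (cs[i]'hi).toFinset) := by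
      intro p hp
      obtain ⟨⟨i, hi⟩, hg⟩ := List.mem_iff_get.1 hp
      simp only [List.length_zip, List.length_map, lt_inf_iff, ← hlen] at hi
      refine ⟨i, hi.1, ?_⟩
      rw [← hg]
      simp [List.get_eq_getElem, List.getElem_zip, List.getElem_map]
  · -- served arcs lie on segment
    intro p hp a ha
    obtain ⟨i, hi, rfl⟩ := hmem p hp
    have := (hget i hi (hlen ▸ hi)).2.2
    exact this.subset (List.mem_toFinset.1 ha)
  · -- head served
    intro p hp
    obtain ⟨i, hi, rfl⟩ := hmem p hp
    obtain ⟨hh, _, _⟩ := hget i hi (hlen ▸ hi)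
    cases hcne : (cs[i]'hi).head? with
    | none => exact absurd (List.head?_eq_none_iff.1 hcne) (hne _ (List.getElem_mem hi))
    | some b =>
        exact ⟨b, by simpa [hcne] using hh,
          List.mem_toFinset.2 (List.mem_of_mem_head? (hcne ▸ rfl))⟩
  · -- last served
    intro p hp
    obtain ⟨i, hi, rfl⟩ := hmem p hp
    obtain ⟨_, hg, _⟩ := hget i hi (hlen ▸ hi)
    cases hcne : (cs[i]'hi).getLast? with
    | none => exact absurd (List.getLast?_eq_none_iff.1 hcne) (hne _ (List.getElem_mem hi))
    | some b =>
        exact ⟨b, by simpa [hcne] using hg,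
          List.mem_toFinset.2 (List.mem_of_mem_getLast? (hcne ▸ rfl))⟩
  · -- capacity
    intro p hp
    obtain ⟨i, hi, rfl⟩ := hmem p hp
    rw [List.sum_toFinset _ (hchnd.1 _ (List.getElem_mem hi))]
    exact GreedySplit.greedy_sum d Q L hdle _ (List.getElem_mem hi)
  · -- greedy maximality
    intro i h a ha
    have hch := GreedySplit.greedy_chain d Q L hdle
    unfold List.Chain' at hch; rw [List.isChain_iff_getElem] at hch
    have hlen2 : (segs.zip (cs.map List.toFinset)).length = cs.length := by
      simp [List.length_zip, ← hlen]
    have hi1 : i + 1 < cs.length := hlen2 ▸ h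
    have hgz : ∀ j (hj : j < cs.length) (hj' : j < (segs.zip (cs.map List.toFinset)).length),
        (segs.zip (cs.map List.toFinset)).get ⟨j, hj'⟩ =
          (segs[j]'(hlen ▸ hj), (cs[j]'hj).toFinset) := by
      intro j hj hj'
      simp [List.get_eq_getElem, List.getElem_zip, List.getElem_map]
    rw [hgz (i+1) hi1 h] at ha
    rw [hgz i (Nat.lt_of_succ_lt hi1) (Nat.lt_of_succ_lt h)]
    have hha := (hget (i+1) hi1 (hlen ▸ hi1)).1
    simp only [List.get_eq_getElem] at hha
    have ha' : (cs[i+1]'hi1).head? = some a := by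
      rw [← hha]; exact ha
    have hclen : (GreedySplit.greedy d Q L).length = cs.length := rfl
    have hkey := hch i (by omega) a ha'
    show Q < (∑ x ∈ (cs[i]'(Nat.lt_of_succ_lt hi1)).toFinset, d x) + d a
    rw [List.sum_toFinset _ (hchnd.1 _ (List.getElem_mem (Nat.lt_of_succ_lt hi1)))]
    exact hkey
end

section
/- Let (W*, s*) be a feasible MWCARP solution with vehicle capacity Q (each tour serving total demand at most Q, together serving all demand arcs), and let W² = {(w_1,w_2), (w_3,w_4), ...} be the consecutive pairing of a feasible splitting (W, s), in which every pair (w_{2i-1}, w_{2i}) serves total demand greater than Q. Then there exists an injective map φ from W² to W* such that for every pair p = (w_i, w_{i+1}), the set (s(w_i) ∪ s(w_{i+1})) ∩ s*(φ(p)) is nonempty. -/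
/-- Consecutive-pairing assignment lemma: given the serving sets `W` of a
feasible splitting (pairwise disjoint, every consecutive pair
`(W[2i], W[2i+1])` serving demand greater than `Q`) and the serving sets
`Wstar` of a feasible solution (pairwise disjoint, each of demand at most
`Q`, jointly covering all arcs served by `W`), there is an injective map `φ`
assigning to each pair a tour of `Wstar` sharing a served demand arc. -/
theorem stmt12 {V : Type*} [DecidableEq V] (d : V × V → ℕ) (Q : ℕ)
    (W : List (Finset (V × V))) (Wstar : List (Finset (V × V)))
    (hWdisj : W.Pairwise fun s t => Disjoint s t)
    (hpair : ∀ i, 2 * i + 1 < W.length →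
      Q < ∑ a ∈ W.getD (2 * i) ∅ ∪ W.getD (2 * i + 1) ∅, d a)
    (hWsdisj : Wstar.Pairwise fun s t => Disjoint s t)
    (hWscap : ∀ s ∈ Wstar, ∑ a ∈ s, d a ≤ Q)
    (hcover : ∀ s ∈ W, ∀ a ∈ s, ∃ t ∈ Wstar, a ∈ t) :
    ∃ φ : Fin (W.length / 2) → Fin Wstar.length, Function.Injective φ ∧
      ∀ i : Fin (W.length / 2),
        ((W.getD (2 * (i : ℕ)) ∅ ∪ W.getD (2 * (i : ℕ) + 1) ∅) ∩
          Wstar.get (φ i)).Nonempty := by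
  classical
  set n := W.length / 2 with hn
  set P : Fin n → Finset (V × V) :=
    fun i => W.getD (2 * (i : ℕ)) ∅ ∪ W.getD (2 * (i : ℕ) + 1) ∅ with hP
  set t : Fin n → Finset (Fin Wstar.length) :=
    fun i => Finset.univ.filter fun j => (P i ∩ Wstar.get j).Nonempty with ht
  -- getD = get for valid indices
  have hidx : ∀ i : Fin n, 2 * (i : ℕ) + 1 < W.length := by
    intro i; have := i.2; omega
  have hgetD : ∀ k (hk : k < W.length), W.getD k ∅ = W.get ⟨k, hk⟩ := by
    intro k hk
    simp [List.getD_eq_getElem?_getD, List.getElem?_eq_getElem hk, List.get_eq_getElem]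
  -- pairwise disjointness of W's entries
  have hWd : ∀ k l (hk : k < W.length) (hl : l < W.length), k ≠ l →
      Disjoint (W.getD k ∅) (W.getD l ∅) := by
    intro k l hk hl hne
    rw [hgetD k hk, hgetD l hl]
    rcases lt_or_gt_of_ne hne with h | h
    · exact List.pairwise_iff_get.mp hWdisj ⟨k, hk⟩ ⟨l, hl⟩ h
    · exact (List.pairwise_iff_get.mp hWdisj ⟨l, hl⟩ ⟨k, hk⟩ h).symm
  -- pairs are pairwise disjoint
  have hPd : ∀ i j : Fin n, i ≠ j → Disjoint (P i) (P j) := by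
    intro i j hij
    have h1 := hidx i
    have h2 := hidx j
    have hne : (i : ℕ) ≠ (j : ℕ) := fun h => hij (Fin.ext h)
    simp only [hP, Finset.disjoint_union_left, Finset.disjoint_union_right]
    refine ⟨⟨?_, ?_⟩, ?_, ?_⟩ <;> apply hWd <;> omega
  -- each pair is contained in the union of its neighbors' Wstar sets
  have hsub : ∀ i : Fin n, ∀ a ∈ P i, ∃ j ∈ t i, a ∈ Wstar.get j := by
    intro i a ha
    have h1 := hidx i
    have hex : ∃ s ∈ W, a ∈ s := by
      rcases Finset.mem_union.mp ha with h | h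
      · rw [hgetD (2 * (i : ℕ)) (by omega)] at h
        exact ⟨_, List.get_mem _ _, h⟩
      · rw [hgetD (2 * (i : ℕ) + 1) h1] at h
        exact ⟨_, List.get_mem _ _, h⟩
    obtain ⟨s, hs, has⟩ := hex
    obtain ⟨u, hu, hau⟩ := hcover s hs a has
    obtain ⟨j, hj⟩ := List.mem_iff_get.mp hu
    refine ⟨j, ?_, by rw [hj]; exact hau⟩
    simp only [ht, Finset.mem_filter, Finset.mem_univ, true_and]
    exact ⟨a, Finset.mem_inter.mpr ⟨ha, by rw [hj]; exact hau⟩⟩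
  -- Hall's condition
  have hall : ∀ S : Finset (Fin n), S.card ≤ (S.biUnion t).card := by
    intro S
    rcases S.eq_empty_or_nonempty with rfl | hSne
    · simp
    -- lower bound: demand of the union of the pairs
    have hdisjS : ∀ x ∈ S, ∀ y ∈ S, x ≠ y → Disjoint (P x) (P y) :=
      fun x _ y _ h => hPd x y h
    have hlow : S.card * (Q + 1) ≤ ∑ a ∈ S.biUnion P, d a := by
      rw [Finset.sum_biUnion hdisjS]
      calc S.card * (Q + 1) = ∑ _i ∈ S, (Q + 1) := by rw [Finset.sum_const, smul_eq_mul]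
        _ ≤ ∑ i ∈ S, ∑ a ∈ P i, d a :=
          Finset.sum_le_sum fun i _ => hpair i (hidx i)
    -- upper bound via covering
    have hsub2 : S.biUnion P ⊆ (S.biUnion t).biUnion fun j => Wstar.get j := by
      intro a ha
      obtain ⟨i, hi, hai⟩ := Finset.mem_biUnion.mp ha
      obtain ⟨j, hj, haj⟩ := hsub i a hai
      exact Finset.mem_biUnion.mpr ⟨j, Finset.mem_biUnion.mpr ⟨i, hi, hj⟩, haj⟩
    have hWsd : ∀ x ∈ S.biUnion t, ∀ y ∈ S.biUnion t, x ≠ y →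
        Disjoint (Wstar.get x) (Wstar.get y) := by
      intro x _ y _ hxy
      rcases lt_or_gt_of_ne hxy with h | h
      · exact List.pairwise_iff_get.mp hWsdisj x y h
      · exact (List.pairwise_iff_get.mp hWsdisj y x h).symm
    have hhigh : ∑ a ∈ S.biUnion P, d a ≤ (S.biUnion t).card * Q := by
      calc ∑ a ∈ S.biUnion P, d a
          ≤ ∑ a ∈ (S.biUnion t).biUnion fun j => Wstar.get j, d a :=
            Finset.sum_le_sum_of_subset hsub2
        _ = ∑ j ∈ S.biUnion t, ∑ a ∈ Wstar.get j, d a := Finset.sum_biUnion hWsd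
        _ ≤ ∑ _j ∈ S.biUnion t, Q :=
            Finset.sum_le_sum fun j _ => hWscap _ (List.get_mem _ _)
        _ = (S.biUnion t).card * Q := by rw [Finset.sum_const, smul_eq_mul]
    have key : S.card * (Q + 1) ≤ (S.biUnion t).card * Q := le_trans hlow hhigh
    by_contra hlt
    push_neg at hlt
    have h1 : (S.biUnion t).card * Q ≤ S.card * Q :=
      Nat.mul_le_mul_right Q (le_of_lt hlt)
    have h2 : S.card * Q < S.card * (Q + 1) :=
      mul_lt_mul_of_pos_left (Nat.lt_succ_self Q) hSne.card_pos
    omega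
  obtain ⟨f, hfinj, hf⟩ :=
    (Finset.all_card_le_biUnion_card_iff_existsInjective' t).mp hall
  refine ⟨f, hfinj, fun i => ?_⟩
  have := hf i
  simp only [ht, Finset.mem_filter] at this
  exact this.2
end

section
/- Hall-type counting lemma: Let X be a finite family of pairwise disjoint sets of items with weights d, such that each member of X has total weight greater than Q, and let Y be a finite family of pairwise disjoint sets each of total weight at most Q, with ∪X ⊆ ∪Y. Define a bipartite graph B on X ∪ Y where x ∈ X is adjacent to y ∈ Y iff x ∩ y ≠ ∅. Then B admits a matching saturating X. -/
/-- Hall-type counting lemma: if `X` is a family of pairwise disjoint sets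
each of total weight `> Q`, `Y` a family of pairwise disjoint sets each of
total weight `≤ Q`, and `⋃X ⊆ ⋃Y`, then the bipartite intersection graph
admits a matching saturating `X`. -/
theorem stmt13 {ι : Type*} [DecidableEq ι] (d : ι → ℕ) (Q : ℕ)
    (X Y : Finset (Finset ι))
    (hXdisj : (X : Set (Finset ι)).PairwiseDisjoint id)
    (hXw : ∀ x ∈ X, Q < ∑ i ∈ x, d i)
    (hYdisj : (Y : Set (Finset ι)).PairwiseDisjoint id)
    (hYw : ∀ y ∈ Y, ∑ i ∈ y, d i ≤ Q)
    (hcov : X.biUnion id ⊆ Y.biUnion id) :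
    ∃ φ : {x // x ∈ X} → {y // y ∈ Y}, Function.Injective φ ∧
      ∀ x : {x // x ∈ X}, ((x : Finset ι) ∩ ((φ x : Finset ι))).Nonempty := by
  classical
  set r : {x // x ∈ X} → Finset (Finset ι) :=
    fun x => Y.filter (fun y => ((x : Finset ι) ∩ y).Nonempty) with hr
  have hall : ∀ A : Finset {x // x ∈ X}, A.card ≤ (A.biUnion r).card := by
    intro A
    set N := A.biUnion r with hN
    -- the union of the items of sets in A
    set S : Finset ι := A.biUnion (fun x => (x : Finset ι)) with hS
    have hNY : ∀ y ∈ N, y ∈ Y := by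
      intro y hy
      obtain ⟨x, hx, hyr⟩ := Finset.mem_biUnion.mp hy
      exact (Finset.mem_filter.mp hyr).1
    have hsub : S ⊆ N.biUnion id := by
      intro i hi
      simp only [hS, Finset.mem_biUnion] at hi
      obtain ⟨x, hxA, hix⟩ := hi
      have hiY : i ∈ Y.biUnion id := hcov (by
        simp only [Finset.mem_biUnion, id]
        exact ⟨x, x.2, hix⟩)
      simp only [Finset.mem_biUnion, id] at hiY
      obtain ⟨y, hyY, hiy⟩ := hiY
      refine Finset.mem_biUnion.2 ⟨y, ?_, hiy⟩
      exact Finset.mem_biUnion.2 ⟨x, hxA, Finset.mem_filter.2 ⟨hyY, ⟨i, Finset.mem_inter.2 ⟨hix, hiy⟩⟩⟩⟩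
    rcases A.eq_empty_or_nonempty with hAe | hAne
    · simp [hAe]
    have h1 : A.card * Q < ∑ i ∈ S, d i := by
      rw [hS, Finset.sum_biUnion (by
        intro a ha b hb hab
        exact hXdisj a.2 b.2 (fun h => hab (Subtype.ext h)))]
      calc A.card * Q = ∑ _x ∈ A, Q := by rw [Finset.sum_const, smul_eq_mul, mul_comm]
        _ < ∑ x ∈ A, ∑ i ∈ (x : Finset ι), d i := by
            exact Finset.sum_lt_sum_of_nonempty hAne (fun x hx => hXw x x.2)
        _ = _ := rfl
    have h2 : ∑ i ∈ S, d i ≤ N.card * Q := by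
      calc ∑ i ∈ S, d i ≤ ∑ i ∈ N.biUnion id, d i :=
            Finset.sum_le_sum_of_subset hsub
        _ = ∑ y ∈ N, ∑ i ∈ y, d i := by
            rw [Finset.sum_biUnion (fun a ha b hb hab =>
              hYdisj (hNY a ha) (hNY b hb) hab)]
            rfl
        _ ≤ ∑ _y ∈ N, Q := Finset.sum_le_sum (fun y hy => hYw y (hNY y hy))
        _ = N.card * Q := by rw [Finset.sum_const, smul_eq_mul, mul_comm]
    exact le_of_lt (Nat.lt_of_mul_lt_mul_right (lt_of_lt_of_le h1 h2))
  obtain ⟨f, hfinj, hf⟩ := (Finset.all_card_le_biUnion_card_iff_exists_injective r).mp hall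
  refine ⟨fun x => ⟨f x, (Finset.mem_filter.mp (hf x)).1⟩, ?_, ?_⟩
  · intro a b hab
    exact hfinj (congrArg Subtype.val hab)
  · intro x
    exact (Finset.mem_filter.mp (hf x)).2
end
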